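/- arXiv:1612.00332 — 2 statements merged into one kernel-verified Lean document; each statement's English description precedes it below -/
import Mathlib

section
/- The mass matrix of the basis (L̃_k) has the explicit form: for all i, j ≥ 1, ∫_{-1}^{1} L̃_i(x)·L̃_j(x) dx equals 2/((2i−1)(2i+3)) if i = j, equals −1/((2r+3)·√((2r+1)(2r+5))) with r = min{i,j} if |i−j| = 2, and equals 0 otherwise. -/
/-!
Integration by parts against `L_{n+2} - L_n`, which vanishes at `±1` and has derivative
`(2n+3) L_{n+1}`, lowers the degree of a test polynomial `p`; by induction on `deg p`, `L_n` is
orthogonal on `[-1, 1]` to every polynomial of degree `< n`. Integrating the three-term recurrence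
against `L_n` and `L_{n+1}` then gives `(2n+3)‖L_{n+1}‖² = (2n+1)‖L_n‖²`, so `‖L_n‖² = 2/(2n+1)`,
and the mass matrix of the `L̃_k` follows by expanding the products bilinearly.
-/

open Polynomial

/-- The Legendre polynomials, defined by the three-term recurrence
`L₀ = 1`, `L₁ = X`, `(k+2)·L_{k+2} = (2k+3)·X·L_{k+1} − (k+1)·L_k`. -/
noncomputable def legendre : ℕ → Polynomial ℝ
  | 0 => 1
  | 1 => Polynomial.X
  | (k + 2) =>
      Polynomial.C ((2 * (k : ℝ) + 3) / ((k : ℝ) + 2)) * (Polynomial.X * legendre (k + 1))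
        - Polynomial.C (((k : ℝ) + 1) / ((k : ℝ) + 2)) * legendre k

/-- The basis functions `L̃_k = (L_{k−1} − L_{k+1})/√(4k+2)`, for `k ≥ 1`. -/
noncomputable def legendreTilde (k : ℕ) : Polynomial ℝ :=
  Polynomial.C (1 / Real.sqrt (4 * (k : ℝ) + 2)) * (legendre (k - 1) - legendre (k + 1))

noncomputable def polyIntegral (a b : ℝ) : ℝ[X] →ₗ[ℝ] ℝ where
  toFun p := ∫ x in a..b, p.eval x
  map_add' p q := by
    simpa using intervalIntegral.integral_add (p.continuous.intervalIntegrable a b)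
      (q.continuous.intervalIntegrable a b)
  map_smul' c p := by simp

@[simp]
theorem polyIntegral_apply (a b : ℝ) (p : ℝ[X]) :
    polyIntegral a b p = ∫ x in a..b, p.eval x := rfl

theorem polyIntegral_mul_derivative (a b : ℝ) (p q : ℝ[X]) :
    polyIntegral a b (p * derivative q)
      = p.eval b * q.eval b - p.eval a * q.eval a - polyIntegral a b (derivative p * q) := by
  simpa using intervalIntegral.integral_mul_deriv_eq_deriv_mul (fun x _ => p.hasDerivAt x)
    (fun x _ => q.hasDerivAt x) (p.derivative.continuous.intervalIntegrable a b)
    (q.derivative.continuous.intervalIntegrable a b)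

theorem legendre_add_two (k : ℕ) :
    ((k : ℝ[X]) + 2) * legendre (k + 2)
      = (2 * (k : ℝ[X]) + 3) * X * legendre (k + 1) - ((k : ℝ[X]) + 1) * legendre k := by
  have hk : (k : ℝ) + 2 ≠ 0 := by positivity
  have hC : ((k : ℝ[X]) + 2) = C ((k : ℝ) + 2) := by simp [C_ofNat]
  rw [legendre, hC, mul_sub, ← mul_assoc (C _) (C _), ← mul_assoc (C _) (C _), ← C_mul,
    ← C_mul, mul_div_cancel₀ _ hk, mul_div_cancel₀ _ hk]
  simp only [map_add, map_mul, map_natCast, map_one, map_ofNat, mul_assoc]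

theorem legendre_succ (n : ℕ) :
    ((n : ℝ) + 1) • legendre (n + 1)
      = (2 * (n : ℝ) + 1) • (X * legendre n) - (n : ℝ) • legendre (n - 1) := by
  simp only [smul_eq_C_mul, map_add, map_mul, map_natCast, map_one, map_ofNat]
  cases n with
  | zero => simp [legendre]
  | succ k => push_cast; linear_combination legendre_add_two k

theorem eval_legendre_of_sq_eq_one {x : ℝ} (hx : x ^ 2 = 1) (n : ℕ) :
    (legendre n).eval x = x ^ n := by
  induction n using Nat.twoStepInduction with
  | zero => simp [legendre]
  | one => simp [legendre]
  | more k ih₀ ih₁ =>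
    have h := congrArg (eval x) (legendre_add_two k)
    simp only [eval_mul, eval_add, eval_sub, eval_natCast, eval_ofNat, eval_one, eval_X, ih₀,
      ih₁] at h
    refine mul_left_cancel₀ (by positivity : (k : ℝ) + 2 ≠ 0) ?_
    linear_combination h + (k + 1) * x ^ k * hx

theorem natDegree_legendre_le (n : ℕ) : (legendre n).natDegree ≤ n := by
  induction n using Nat.twoStepInduction with
  | zero => simp [legendre]
  | one => simp [legendre]
  | more k ih₀ ih₁ =>
    rw [legendre]
    refine (natDegree_sub_le _ _).trans (max_le ?_ ?_)
    · refine (natDegree_C_mul_le _ _).trans ((natDegree_mul_le (p := X)).trans ?_)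
      have := natDegree_X_le (R := ℝ)
      omega
    · exact (natDegree_C_mul_le _ _).trans (ih₀.trans (by omega))

theorem derivative_legendre_add_two (k : ℕ) :
    ((k : ℝ[X]) + 2) * derivative (legendre (k + 2))
      = (2 * (k : ℝ[X]) + 3) * (legendre (k + 1) + X * derivative (legendre (k + 1)))
        - ((k : ℝ[X]) + 1) * derivative (legendre k) := by
  have h := congrArg derivative (legendre_add_two k)
  simp only [derivative_mul, derivative_sub, derivative_add, derivative_natCast, derivative_ofNat,
    derivative_one, derivative_X] at h
  linear_combination h

/-- Proved jointly because each inductive step of one identity uses the other. -/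
theorem derivative_legendre_succ_and_X_mul (k : ℕ) :
    derivative (legendre (k + 1))
        = X * derivative (legendre k) + ((k : ℝ[X]) + 1) * legendre k ∧
      X * derivative (legendre (k + 1))
        = derivative (legendre k) + ((k : ℝ[X]) + 1) * legendre (k + 1) := by
  induction k with
  | zero => simp [legendre]
  | succ k ih =>
    obtain ⟨hA, hB⟩ := ih
    have hk : ((k : ℝ[X]) + 2) ≠ 0 := by exact_mod_cast (Nat.succ_ne_zero (k + 1))
    have hD := derivative_legendre_add_two k
    have hR := legendre_add_two k
    push_cast
    constructor
    · refine mul_left_cancel₀ hk ?_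
      linear_combination hD + (k + 1) * hB
    · refine mul_left_cancel₀ hk ?_
      linear_combination X * hD - (k + 2) * hR + (2 * k + 3) * X * hB - (k + 2) * hA

theorem derivative_legendre_add_two_sub (k : ℕ) :
    derivative (legendre (k + 2)) - derivative (legendre k)
      = (2 * (k : ℝ) + 3) • legendre (k + 1) := by
  have hA := (derivative_legendre_succ_and_X_mul (k + 1)).1
  have hB := (derivative_legendre_succ_and_X_mul k).2
  simp only [smul_eq_C_mul, map_add, map_mul, map_natCast, map_ofNat]
  push_cast at hA
  linear_combination hA + hB

theorem mul_polyIntegral_mul_legendre_succ (p : ℝ[X]) (n : ℕ) :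
    (2 * (n : ℝ) + 3) * polyIntegral (-1) 1 (p * legendre (n + 1))
      = polyIntegral (-1) 1 (derivative p * (legendre n - legendre (n + 2))) := by
  have hq {x : ℝ} (hx : x ^ 2 = 1) : (legendre (n + 2) - legendre n).eval x = 0 := by
    rw [eval_sub, eval_legendre_of_sq_eq_one hx, eval_legendre_of_sq_eq_one hx]
    linear_combination x ^ n * hx
  have h := polyIntegral_mul_derivative (-1) 1 p (legendre (n + 2) - legendre n)
  rw [derivative_sub, derivative_legendre_add_two_sub, mul_smul_comm, map_smul, smul_eq_mul,
    hq (by norm_num), hq (by norm_num)] at h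
  rw [h, mul_sub, mul_sub, map_sub, map_sub]
  ring

theorem polyIntegral_mul_legendre_eq_zero {p : ℝ[X]} {n : ℕ} (hp : p.natDegree < n) :
    polyIntegral (-1) 1 (p * legendre n) = 0 := by
  induction hd : p.natDegree using Nat.strong_induction_on generalizing p n with
  | _ d ih =>
  obtain ⟨n, rfl⟩ : ∃ m, n = m + 1 := ⟨n - 1, by omega⟩
  have key := mul_polyIntegral_mul_legendre_succ p n
  have hder : polyIntegral (-1) 1 (derivative p * (legendre n - legendre (n + 2))) = 0 := by
    rcases eq_or_ne d 0 with rfl | hd0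
    · simp [derivative_of_natDegree_zero hd]
    · have hlt : (derivative p).natDegree < d := hd ▸ natDegree_derivative_lt (hd ▸ hd0)
      rw [mul_sub, map_sub, ih _ hlt (by omega) rfl, ih _ hlt (by omega) rfl, sub_zero]
  rw [hder] at key
  exact (mul_eq_zero.mp key).resolve_left (by positivity)

theorem polyIntegral_legendre_mul_legendre_of_ne {m n : ℕ} (h : m ≠ n) :
    polyIntegral (-1) 1 (legendre m * legendre n) = 0 := by
  rcases h.lt_or_gt with h | h
  · exact polyIntegral_mul_legendre_eq_zero ((natDegree_legendre_le m).trans_lt h)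
  · rw [mul_comm]
    exact polyIntegral_mul_legendre_eq_zero ((natDegree_legendre_le n).trans_lt h)

theorem polyIntegral_legendre_succ_mul (n : ℕ) (q : ℝ[X]) :
    ((n : ℝ) + 1) * polyIntegral (-1) 1 (legendre (n + 1) * q)
      = (2 * (n : ℝ) + 1) * polyIntegral (-1) 1 (X * legendre n * q)
        - n * polyIntegral (-1) 1 (legendre (n - 1) * q) := by
  have h := congrArg (fun p => polyIntegral (-1) 1 (p * q)) (legendre_succ n)
  simpa only [sub_mul, smul_mul_assoc, map_sub, map_smul, smul_eq_mul] using h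

theorem mul_polyIntegral_legendre_mul_self (n : ℕ) :
    (2 * (n : ℝ) + 1) * polyIntegral (-1) 1 (legendre n * legendre n) = 2 := by
  induction n with
  | zero => norm_num [legendre]
  | succ n ih =>
    have hA := polyIntegral_legendre_succ_mul n (legendre (n + 1))
    have hB := polyIntegral_legendre_succ_mul (n + 1) (legendre n)
    rw [polyIntegral_legendre_mul_legendre_of_ne (m := n - 1) (n := n + 1) (by omega)] at hA
    rw [polyIntegral_legendre_mul_legendre_of_ne (m := n + 2) (n := n) (by omega),
      Nat.add_sub_cancel, mul_right_comm X] at hB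
    push_cast at hB ⊢
    refine mul_left_cancel₀ (by positivity : ((n : ℝ) + 1) * (2 * n + 1) ≠ 0) ?_
    linear_combination (2 * (n : ℝ) + 3) * (2 * n + 1) * hA - (2 * (n : ℝ) + 1) ^ 2 * hB
      + (2 * (n : ℝ) + 1) * (n + 1) * ih

theorem polyIntegral_legendre_mul_legendre (m n : ℕ) :
    polyIntegral (-1) 1 (legendre m * legendre n)
      = if m = n then 2 / (2 * (n : ℝ) + 1) else 0 := by
  split_ifs with h
  · rw [h, eq_div_iff (by positivity), mul_comm]
    exact mul_polyIntegral_legendre_mul_self n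
  · exact polyIntegral_legendre_mul_legendre_of_ne h

theorem polyIntegral_legendreTilde_mul (i j : ℕ) :
    polyIntegral (-1) 1 (legendreTilde i * legendreTilde j)
      = 1 / √(4 * (i : ℝ) + 2) * (1 / √(4 * (j : ℝ) + 2)) *
        (polyIntegral (-1) 1 (legendre (i - 1) * legendre (j - 1))
          - polyIntegral (-1) 1 (legendre (i - 1) * legendre (j + 1))
          - polyIntegral (-1) 1 (legendre (i + 1) * legendre (j - 1))
          + polyIntegral (-1) 1 (legendre (i + 1) * legendre (j + 1))) := by
  rw [legendreTilde, legendreTilde, ← smul_eq_C_mul, ← smul_eq_C_mul, smul_mul_smul_comm,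
    map_smul, smul_eq_mul]
  simp only [mul_sub, sub_mul, map_sub]
  ring

theorem polyIntegral_legendreTilde_mul_self {i : ℕ} (hi : 1 ≤ i) :
    polyIntegral (-1) 1 (legendreTilde i * legendreTilde i)
      = 2 / ((2 * (i : ℝ) - 1) * (2 * (i : ℝ) + 3)) := by
  rw [polyIntegral_legendreTilde_mul]
  simp (disch := omega) only [polyIntegral_legendre_mul_legendre, ↓reduceIte, if_neg, sub_zero]
  have hi' : (1 : ℝ) ≤ i := by exact_mod_cast hi
  rw [div_mul_div_comm, one_mul, Real.mul_self_sqrt (by positivity), Nat.cast_sub hi,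
    Nat.cast_one, div_add_div _ _ (by linarith) (by positivity), div_mul_div_comm,
    div_eq_div_iff (by positivity) (mul_ne_zero (by linarith) (by positivity))]
  push_cast
  ring

theorem polyIntegral_legendreTilde_mul_add_two (i : ℕ) :
    polyIntegral (-1) 1 (legendreTilde i * legendreTilde (i + 2))
      = -1 / ((2 * (i : ℝ) + 3) * √((2 * (i : ℝ) + 1) * (2 * (i : ℝ) + 5))) := by
  have hsqrt : √(4 * (i : ℝ) + 2) * √(4 * ((i + 2 : ℕ) : ℝ) + 2)
      = 2 * √((2 * (i : ℝ) + 1) * (2 * (i : ℝ) + 5)) := by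
    rw [← Real.sqrt_mul (by positivity),
      show (4 * (i : ℝ) + 2) * (4 * ((i + 2 : ℕ) : ℝ) + 2)
        = 2 ^ 2 * ((2 * (i : ℝ) + 1) * (2 * (i : ℝ) + 5)) by push_cast; ring,
      Real.sqrt_mul (by positivity), Real.sqrt_sq (by norm_num)]
  rw [polyIntegral_legendreTilde_mul, div_mul_div_comm, one_mul, hsqrt]
  simp (disch := omega) only [polyIntegral_legendre_mul_legendre, if_pos, if_neg]
  push_cast
  field_simp
  ring

theorem polyIntegral_legendreTilde_mul_of_ne {i j : ℕ} (hi : 1 ≤ i) (hj : 1 ≤ j) (h : i ≠ j)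
    (h₁ : i ≠ j + 2) (h₂ : j ≠ i + 2) :
    polyIntegral (-1) 1 (legendreTilde i * legendreTilde j) = 0 := by
  rw [polyIntegral_legendreTilde_mul]
  simp (disch := omega) only [polyIntegral_legendre_mul_legendre, if_neg]
  ring

/-- Explicit form of the mass matrix of the basis `(L̃_k)`. -/
theorem legendreTilde_mass_matrix :
    ∀ i j : ℕ, 1 ≤ i → 1 ≤ j →
      (∫ x in (-1 : ℝ)..1, (legendreTilde i).eval x * (legendreTilde j).eval x)
        = if i = j then 2 / ((2 * (i : ℝ) - 1) * (2 * (i : ℝ) + 3))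
          else if i = j + 2 ∨ j = i + 2 then
            -1 / ((2 * ((min i j : ℕ) : ℝ) + 3) *
              Real.sqrt ((2 * ((min i j : ℕ) : ℝ) + 1) * (2 * ((min i j : ℕ) : ℝ) + 5)))
          else 0 := by
  intro i j hi hj
  simp_rw [← eval_mul]
  rw [← polyIntegral_apply]
  split_ifs with hij hadj
  · subst hij
    exact polyIntegral_legendreTilde_mul_self hi
  · rcases hadj with rfl | rfl
    · rw [mul_comm, min_eq_right (by omega)]
      exact polyIntegral_legendreTilde_mul_add_two j
    · rw [min_eq_left (by omega)]
      exact polyIntegral_legendreTilde_mul_add_two i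
  · push Not at hadj
    exact polyIntegral_legendreTilde_mul_of_ne hi hj hij hadj.1 hadj.2
end

section
/- For every N ≥ 2, the polynomials L̃_1, …, L̃_{N−1} form a basis of the space ℙ_N^0 of real polynomials of degree at most N vanishing at x = −1 and x = 1. -/
/-!
Since `L_j(1) = 1` and `L_j(-1) = (-1)^j`, every `L̃_k` vanishes at `±1`, and its degree is exactly
`k + 1`, that of its top term `L_{k+1}`. So `L̃_1, …, L̃_{N-1}` are `N - 1` linearly independent
elements of `ℙ_N^0`. Conversely a polynomial of degree `< 2` with the two roots `±1` is zero, so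
`ℙ_N^0` is disjoint from a `2`-dimensional subspace of the `(N + 1)`-dimensional space of
polynomials of degree `≤ N`, and has dimension at most `N - 1`.
-/

open Polynomial

/-- `ℙ_N^0`: real polynomials of degree at most `N` vanishing at `x = −1` and `x = 1`. -/
noncomputable def PN0 (N : ℕ) : Submodule ℝ (Polynomial ℝ) :=
  Polynomial.degreeLE ℝ (N : ℕ) ⊓ LinearMap.ker (Polynomial.leval (-1 : ℝ)) ⊓
    LinearMap.ker (Polynomial.leval (1 : ℝ))

open Module

theorem Polynomial.linearIndependent_of_natDegree_injective {R ι : Type*} [Ring R]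
    [NoZeroDivisors R] {v : ι → R[X]} (hv : ∀ i, v i ≠ 0)
    (hdeg : Function.Injective fun i => (v i).natDegree) : LinearIndependent R v := by
  classical
  rw [linearIndependent_iff']
  intro s g hsum
  induction s using Finset.induction_on_max_value (fun i => (v i).natDegree) generalizing g with
  | empty => simp
  | insert a s ha hmax ih =>
    have hlt : ∀ j ∈ s, (v j).natDegree < (v a).natDegree := fun j hj =>
      (hmax j hj).lt_of_ne fun h => ha (hdeg h ▸ hj)
    rw [Finset.sum_insert ha] at hsum
    have hga : g a = 0 := by
      have hcoeff := congrArg (coeff · (v a).natDegree) hsum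
      simp only [coeff_add, finsetSum_coeff, coeff_smul, coeff_zero, smul_eq_mul] at hcoeff
      rw [Finset.sum_eq_zero fun j hj => by rw [coeff_eq_zero_of_natDegree_lt (hlt j hj), mul_zero],
        add_zero, ← leadingCoeff] at hcoeff
      exact (mul_eq_zero.mp hcoeff).resolve_right (leadingCoeff_ne_zero.mpr (hv a))
    rw [hga, zero_smul, zero_add] at hsum
    intro i hi
    rcases Finset.mem_insert.mp hi with rfl | hi
    · exact hga
    · exact ih g hsum i hi

theorem Polynomial.finrank_degreeLT (K : Type*) [DivisionRing K] (n : ℕ) :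
    finrank K (degreeLT K n) = n := by
  rw [finrank_eq_card_basis (degreeLT.basis K n), Fintype.card_fin]

theorem Polynomial.finrank_add_le_of_disjoint_degreeLT {K : Type*} [DivisionRing K]
    {V : Submodule K K[X]} {m n : ℕ} (hV : V ≤ degreeLT K n) (hmn : m ≤ n)
    (hdisj : Disjoint V (degreeLT K m)) : finrank K V + m ≤ n := by
  have : FiniteDimensional K V := Submodule.finiteDimensional_of_le hV
  calc finrank K V + m = finrank K V + finrank K (degreeLT K m) := by rw [finrank_degreeLT]
    _ = finrank K ↥(V ⊔ degreeLT K m) := by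
        rw [← Submodule.finrank_sup_add_finrank_inf_eq, hdisj.eq_bot, finrank_bot, add_zero]
    _ ≤ finrank K (degreeLT K n) := Submodule.finrank_mono (sup_le hV (degreeLT_mono hmn))
    _ = n := finrank_degreeLT K n

theorem legendre_succ_succ (k : ℕ) :
    legendre (k + 2) =
      C ((2 * (k : ℝ) + 3) / ((k : ℝ) + 2)) * (X * legendre (k + 1))
        - C (((k : ℝ) + 1) / ((k : ℝ) + 2)) * legendre k := by
  rw [legendre]

theorem degree_legendre : ∀ k : ℕ, (legendre k).degree = k
  | 0 => by simp [legendre]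
  | 1 => by simp [legendre]
  | (k + 2) => by
    have hcoef : (2 * (k : ℝ) + 3) / ((k : ℝ) + 2) ≠ 0 := by positivity
    have hlead : (C ((2 * (k : ℝ) + 3) / ((k : ℝ) + 2)) * (X * legendre (k + 1))).degree =
        ↑(k + 2) := by
      rw [degree_C_mul hcoef, degree_mul, degree_X, degree_legendre (k + 1)]
      norm_cast
      ring
    rw [legendre_succ_succ, degree_sub_eq_left_of_degree_lt] <;> rw [hlead]
    have hcoef' : ((k : ℝ) + 1) / ((k : ℝ) + 2) ≠ 0 := by positivity
    rw [degree_C_mul hcoef', degree_legendre k]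
    exact_mod_cast (by omega : k < k + 2)

theorem legendre_eval_one : ∀ k : ℕ, (legendre k).eval 1 = 1
  | 0 => by simp [legendre]
  | 1 => by simp [legendre]
  | (k + 2) => by
    rw [legendre_succ_succ]
    simp only [eval_sub, eval_mul, eval_C, eval_X, legendre_eval_one (k + 1),
      legendre_eval_one k, mul_one]
    field_simp
    ring

theorem legendre_eval_neg_one : ∀ k : ℕ, (legendre k).eval (-1) = (-1) ^ k
  | 0 => by simp [legendre]
  | 1 => by simp [legendre]
  | (k + 2) => by
    rw [legendre_succ_succ]
    simp only [eval_sub, eval_mul, eval_C, eval_X, legendre_eval_neg_one (k + 1),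
      legendre_eval_neg_one k, pow_succ]
    field_simp
    ring

theorem degree_legendreTilde (k : ℕ) : (legendreTilde (k + 1)).degree = ↑(k + 2) := by
  have hscale : 1 / Real.sqrt (4 * ((k + 1 : ℕ) : ℝ) + 2) ≠ 0 := by positivity
  rw [legendreTilde, Nat.add_sub_cancel, degree_C_mul hscale,
    degree_sub_eq_right_of_degree_lt, degree_legendre]
  rw [degree_legendre, degree_legendre]
  exact_mod_cast (by omega : k < k + 2)

theorem legendreTilde_eval_one (k : ℕ) : (legendreTilde (k + 1)).eval 1 = 0 := by
  simp [legendreTilde, legendre_eval_one]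

theorem legendreTilde_eval_neg_one (k : ℕ) : (legendreTilde (k + 1)).eval (-1) = 0 := by
  simp only [legendreTilde, Nat.add_sub_cancel, eval_mul, eval_C, eval_sub, legendre_eval_neg_one,
    pow_succ]
  ring

theorem legendreTilde_mem_PN0 {k N : ℕ} (hk : k + 2 ≤ N) : legendreTilde (k + 1) ∈ PN0 N := by
  simp only [PN0, Submodule.mem_inf, mem_degreeLE, LinearMap.mem_ker, leval_apply,
    degree_legendreTilde, legendreTilde_eval_one, legendreTilde_eval_neg_one, and_true]
  exact_mod_cast hk

theorem PN0_le_degreeLT (N : ℕ) : PN0 N ≤ degreeLT ℝ (N + 1) := by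
  rw [degreeLT_succ_eq_degreeLE]
  exact inf_le_left.trans inf_le_left

theorem disjoint_PN0_degreeLT_two (N : ℕ) : Disjoint (PN0 N) (degreeLT ℝ 2) := by
  rw [Submodule.disjoint_def]
  intro p hp hlin
  simp only [PN0, Submodule.mem_inf, LinearMap.mem_ker, leval_apply] at hp
  refine eq_zero_of_degree_lt_of_eval_finset_eq_zero {-1, 1} ?_ ?_
  · rw [Finset.card_pair (by norm_num)]
    exact mem_degreeLT.mp hlin
  · simp [hp.1.2, hp.2]

theorem finrank_PN0_add_two_le {N : ℕ} (hN : 1 ≤ N) : finrank ℝ (PN0 N) + 2 ≤ N + 1 :=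
  finrank_add_le_of_disjoint_degreeLT (PN0_le_degreeLT N) (by omega) (disjoint_PN0_degreeLT_two N)

/-- For every `N ≥ 2`, the polynomials `L̃_1, …, L̃_{N−1}` form a basis of `ℙ_N^0`:
they belong to `ℙ_N^0`, are linearly independent, and span `ℙ_N^0`. -/
theorem legendreTilde_basis_PN0 :
    ∀ N : ℕ, 2 ≤ N →
      (∀ i : Fin (N - 1), legendreTilde ((i : ℕ) + 1) ∈ PN0 N)
      ∧ LinearIndependent ℝ (fun i : Fin (N - 1) => legendreTilde ((i : ℕ) + 1))
      ∧ Submodule.span ℝ (Set.range fun i : Fin (N - 1) => legendreTilde ((i : ℕ) + 1))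
          = PN0 N := by
  intro N hN
  have hmem (i : Fin (N - 1)) : legendreTilde ((i : ℕ) + 1) ∈ PN0 N :=
    legendreTilde_mem_PN0 (by omega)
  have hindep : LinearIndependent ℝ (fun i : Fin (N - 1) => legendreTilde ((i : ℕ) + 1)) := by
    refine linearIndependent_of_natDegree_injective
      (fun i => ne_zero_of_coe_le_degree (degree_legendreTilde i).ge) fun i j hij => ?_
    simp only [natDegree_eq_of_degree_eq_some (degree_legendreTilde _)] at hij
    exact Fin.ext (by omega)
  have : FiniteDimensional ℝ (PN0 N) := Submodule.finiteDimensional_of_le (PN0_le_degreeLT N)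
  refine ⟨hmem, hindep, Submodule.eq_of_le_of_finrank_le
    (Submodule.span_le.mpr (Set.range_subset_iff.mpr hmem)) ?_⟩
  rw [finrank_span_eq_card hindep, Fintype.card_fin]
  have := finrank_PN0_add_two_le (N := N) (by omega)
  omega
end
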